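/- Suppose û₀ ∈ S(ℝ²) satisfies |û₀(k,l)| ≤ C_N/((1+|k|^N)(1+|l|^N)) for all N. Define ṽ(k,ω) = (i|ω|/2π)·𝟙_{|ω|≥|k|}·û₀(k, √(ω²−k²)). Then for every k, ∫_{−∞}^{∞} |ṽ(k,ω)| dω ≤ C/(1+k²) for some constant C independent of k. In particular ṽ ∈ L¹(ℝ²). -/

import Mathlib

/-!
On the support of `vtil u₀ k`, the point `x = (k, √(ω² - k²))` at which `u₀` is evaluated
satisfies `k² ≤ ‖x‖²` and `ω² = k² + x.2² ≤ 2‖x‖²`. Hence the weight `|ω| (1 + k²) (1 + ω²)` is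
`O((1 + ‖x‖)⁵)`, which the decay of `u₀` absorbs, so that
`‖vtil u₀ k ω‖ ≤ C (1 + k²)⁻¹ (1 + ω²)⁻¹`. Both claims follow by integrating this product bound.
-/

open MeasureTheory Real

noncomputable def vtil (u₀ : ℝ × ℝ → ℂ) (k ω : ℝ) : ℂ :=
  (Complex.I * |ω| / (2 * Real.pi)) *
    (if |k| ≤ |ω| then u₀ (k, Real.sqrt (ω ^ 2 - k ^ 2)) else 0)

lemma SchwartzMap.exists_one_add_norm_pow_mul_le {E F : Type*} [NormedAddCommGroup E]
    [NormedSpace ℝ E] [NormedAddCommGroup F] [NormedSpace ℝ F] (f : SchwartzMap E F) (k : ℕ) :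
    ∃ C, ∀ x, (1 + ‖x‖) ^ k * ‖f x‖ ≤ C :=
  ⟨_, fun x => by
    simpa using one_add_le_sup_seminorm_apply (𝕜 := ℝ) (m := (k, 0)) le_rfl le_rfl f x⟩

lemma abs_mul_one_add_sq_mul_one_add_sq_le {k ω m : ℝ} (hm : 0 ≤ m) (hk : k ^ 2 ≤ m ^ 2)
    (hω : ω ^ 2 ≤ 2 * m ^ 2) :
    |ω| * ((1 + k ^ 2) * (1 + ω ^ 2)) ≤ 4 * (1 + m) ^ 5 := by
  have hω' : |ω| ≤ 2 * (1 + m) := abs_le_of_sq_le_sq (by nlinarith) (by positivity)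
  calc |ω| * ((1 + k ^ 2) * (1 + ω ^ 2))
      ≤ 2 * (1 + m) * ((1 + m) ^ 2 * (2 * (1 + m) ^ 2)) := by
        gcongr
        · nlinarith
        · nlinarith
    _ = 4 * (1 + m) ^ 5 := by ring

lemma vtil_of_lt {u₀ : ℝ × ℝ → ℂ} {k ω : ℝ} (h : |ω| < |k|) : vtil u₀ k ω = 0 := by
  simp [vtil, not_le.mpr h]

lemma norm_vtil_of_le {u₀ : ℝ × ℝ → ℂ} {k ω : ℝ} (h : |k| ≤ |ω|) :
    ‖vtil u₀ k ω‖ = |ω| / (2 * π) * ‖u₀ (k, √(ω ^ 2 - k ^ 2))‖ := by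
  rw [vtil, if_pos h, norm_mul, norm_div, norm_mul, Complex.norm_I, one_mul,
    Complex.norm_real, Real.norm_eq_abs, abs_abs]
  norm_num [abs_of_pos pi_pos]

lemma norm_vtil_le {u₀ : ℝ × ℝ → ℂ} {C : ℝ} (hu₀ : ∀ x, (1 + ‖x‖) ^ 5 * ‖u₀ x‖ ≤ C)
    (k ω : ℝ) : ‖vtil u₀ k ω‖ ≤ C / (1 + k ^ 2) * (1 + ω ^ 2)⁻¹ := by
  have hC : 0 ≤ C := (by positivity : (0 : ℝ) ≤ (1 + ‖(0 : ℝ × ℝ)‖) ^ 5 * _).trans (hu₀ 0)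
  rcases lt_or_ge |ω| |k| with h | h
  · rw [vtil_of_lt h, norm_zero]; positivity
  set x : ℝ × ℝ := (k, √(ω ^ 2 - k ^ 2))
  have hω : ω ^ 2 = k ^ 2 + x.2 ^ 2 := by
    rw [sq_sqrt (by nlinarith [sq_le_sq.mpr h])]; ring
  have hk : k ^ 2 ≤ ‖x‖ ^ 2 := by
    simpa using pow_le_pow_left₀ (norm_nonneg _) (norm_fst_le x) 2
  have hl : x.2 ^ 2 ≤ ‖x‖ ^ 2 := by
    simpa using pow_le_pow_left₀ (norm_nonneg _) (norm_snd_le x) 2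
  have hweight : |ω| * ((1 + k ^ 2) * (1 + ω ^ 2)) ≤ 2 * π * (1 + ‖x‖) ^ 5 := by
    have := abs_mul_one_add_sq_mul_one_add_sq_le (ω := ω) (norm_nonneg x) hk (by linarith)
    nlinarith [pi_gt_three, pow_nonneg (by positivity : (0 : ℝ) ≤ 1 + ‖x‖) 5]
  rw [norm_vtil_of_le h]
  calc |ω| / (2 * π) * ‖u₀ x‖
      = |ω| * ((1 + k ^ 2) * (1 + ω ^ 2)) * ‖u₀ x‖ / (2 * π) / (1 + k ^ 2) * (1 + ω ^ 2)⁻¹ := by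
        field_simp
    _ ≤ 2 * π * (1 + ‖x‖) ^ 5 * ‖u₀ x‖ / (2 * π) / (1 + k ^ 2) * (1 + ω ^ 2)⁻¹ := by gcongr
    _ = (1 + ‖x‖) ^ 5 * ‖u₀ x‖ / (1 + k ^ 2) * (1 + ω ^ 2)⁻¹ := by field_simp
    _ ≤ C / (1 + k ^ 2) * (1 + ω ^ 2)⁻¹ := by gcongr; exact hu₀ x

lemma measurable_vtil {u₀ : ℝ × ℝ → ℂ} (hu₀ : Continuous u₀) :
    Measurable fun p : ℝ × ℝ => vtil u₀ p.1 p.2 := by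
  unfold vtil
  refine Measurable.mul (by fun_prop) <|
    Measurable.ite (measurableSet_le (by fun_prop) (by fun_prop)) ?_ measurable_const
  exact hu₀.measurable.comp (measurable_fst.prodMk (by fun_prop))

theorem vtil_L1_bound (u₀ : SchwartzMap (ℝ × ℝ) ℂ) :
    ∃ C : ℝ,
      (∀ k : ℝ, ∫ ω : ℝ, ‖vtil (fun p => u₀ p) k ω‖ ≤ C / (1 + k ^ 2)) ∧
      Integrable (fun p : ℝ × ℝ => vtil (fun q => u₀ q) p.1 p.2) := by
  obtain ⟨C, hC⟩ := u₀.exists_one_add_norm_pow_mul_le 5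
  have hbound := norm_vtil_le hC
  refine ⟨C * π, fun k => ?_, ?_⟩
  · calc ∫ ω, ‖vtil (fun p => u₀ p) k ω‖
        ≤ ∫ ω, C / (1 + k ^ 2) * (1 + ω ^ 2)⁻¹ :=
          integral_mono_of_nonneg (.of_forall fun _ => norm_nonneg _)
            (integrable_inv_one_add_sq.const_mul _) (.of_forall (hbound k))
      _ = C * π / (1 + k ^ 2) := by
          rw [integral_const_mul, integral_univ_inv_one_add_sq, div_mul_eq_mul_div]
  · have hdom : Integrable (fun p : ℝ × ℝ => C / (1 + p.1 ^ 2) * (1 + p.2 ^ 2)⁻¹) :=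
      (integrable_inv_one_add_sq.const_mul C).mul_prod integrable_inv_one_add_sq
    exact hdom.mono' (measurable_vtil u₀.continuous).aestronglyMeasurable
      (.of_forall fun p => hbound p.1 p.2)
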